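/- For every l ≥ 0, the space of ℝ³-valued polynomial vector fields of total degree ≤ l on ℝ³ decomposes as a direct sum 𝒢^l ⊕ 𝒢^{c,l}, where 𝒢^l = { ∇p : p polynomial of degree ≤ l+1 } and 𝒢^{c,l} = { x × v : v ℝ³-valued polynomial field of degree ≤ l−1 }. -/

import Mathlib

open MvPolynomial

/-- ℝ³-valued polynomial vector fields with components of total degree ≤ l. -/
noncomputable def polyVec3 (l : ℕ) : Submodule ℝ (Fin 3 → MvPolynomial (Fin 3) ℝ) :=
  Submodule.pi Set.univ fun _ => MvPolynomial.restrictTotalDegree (Fin 3) ℝ l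

/-- 𝒢^l = gradients of polynomials of degree ≤ l+1. -/
noncomputable def Gsp3 (l : ℕ) : Submodule ℝ (Fin 3 → MvPolynomial (Fin 3) ℝ) :=
  Submodule.span ℝ {v | ∃ p : MvPolynomial (Fin 3) ℝ,
    p.totalDegree ≤ l + 1 ∧ v = fun i => MvPolynomial.pderiv i p}

/-- The coordinate vector x = (x₁, x₂, x₃) as a polynomial vector field. -/
noncomputable def xvec3 : Fin 3 → MvPolynomial (Fin 3) ℝ := ![X 0, X 1, X 2]

/-- 𝒢^{c,l} = x × 𝒫^{l−1}(ℝ³)³ (reduced to {0} when l = 0). -/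
noncomputable def Gcsp3 (l : ℕ) : Submodule ℝ (Fin 3 → MvPolynomial (Fin 3) ℝ) :=
  Submodule.span ℝ {w | ∃ v : Fin 3 → MvPolynomial (Fin 3) ℝ,
    (∀ i, (v i).totalDegree + 1 ≤ l) ∧ w = crossProduct xvec3 v}

/-!
The radial part `x ⬝ F` of a field separates the two summands. On a gradient it is the Euler
operator `x ⬝ ∇p`, which multiplies the coefficient of `x^d` by `|d|`; so it kills only the
gradients of constants, and any polynomial without constant term, in particular `x ⬝ F`, is
`x ⬝ ∇p` for some `p` of no larger degree. On `x × v` it vanishes, and conversely, by exactness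
of the Koszul complex of `x₁, x₂, x₃`, a field `G` with `x ⬝ G = 0` is `x × v` with
`deg v < deg G`. Hence `F = ∇p + (F - ∇p)` with `F - ∇p ∈ 𝒢^{c,l}`.
-/

open scoped Matrix

namespace MvPolynomial

section Euler

variable {σ R : Type*} [CommSemiring R]

noncomputable def grad : MvPolynomial σ R →ₗ[R] σ → MvPolynomial σ R :=
  LinearMap.pi fun i => (pderiv i).toLinearMap

@[simp] lemma grad_apply (p : MvPolynomial σ R) (i : σ) : grad p i = pderiv i p := rfl

lemma totalDegree_pderiv_le (p : MvPolynomial σ R) (i : σ) :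
    (pderiv i p).totalDegree ≤ p.totalDegree - 1 := by
  conv_lhs => rw [p.as_sum, map_sum]
  refine totalDegree_finsetSum_le fun d hd => ?_
  refine ((isHomogeneous_monomial (coeff d p) rfl).pderiv (i := i)).totalDegree_le.trans ?_
  exact Nat.sub_le_sub_right (le_totalDegree hd) 1

variable [Fintype σ]

noncomputable def dotX : (σ → MvPolynomial σ R) →ₗ[R] MvPolynomial σ R where
  toFun w := X ⬝ᵥ w
  map_add' := dotProduct_add X
  map_smul' c w := dotProduct_smul c X w

lemma dotX_apply (w : σ → MvPolynomial σ R) : dotX w = ∑ i, X i * w i := rfl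

lemma coeff_zero_dotX (w : σ → MvPolynomial σ R) : coeff 0 (dotX w) = 0 := by
  simp [dotX_apply, coeff_sum, ← constantCoeff_eq]

lemma totalDegree_dotX_le [Nontrivial R] {w : σ → MvPolynomial σ R} {n : ℕ}
    (hw : ∀ i, (w i).totalDegree ≤ n) : (dotX w).totalDegree ≤ n + 1 :=
  totalDegree_finsetSum_le fun i _ => (totalDegree_mul _ _).trans (by
    rw [totalDegree_X, add_comm]; exact Nat.add_le_add_right (hw i) 1)

lemma coeff_zero_eq_zero_of_dotX_eq_zero {g : σ → MvPolynomial σ R} (h : dotX g = 0)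
    (i : σ) : coeff 0 (g i) = 0 := by
  classical
  have := congrArg (coeff (Finsupp.single i 1)) h
  rw [dotX_apply, coeff_sum, Finset.sum_eq_single i] at this
  · simpa [coeff_X_mul'] using this
  · intro j _ hj
    simp [coeff_X_mul', hj]
  · simp

lemma dotX_grad_monomial (d : σ →₀ ℕ) (c : R) :
    dotX (grad (monomial d c)) = d.degree • monomial d c := by
  simp only [dotX_apply, grad_apply, X_mul_pderiv_monomial, ← Finset.sum_smul,
    Finsupp.degree_eq_sum]

lemma coeff_dotX_grad (p : MvPolynomial σ R) (d : σ →₀ ℕ) :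
    coeff d (dotX (grad p)) = d.degree • coeff d p := by
  induction p using MvPolynomial.induction_on' with
  | monomial e c =>
    classical
    rw [dotX_grad_monomial, coeff_smul, coeff_monomial]
    split_ifs with h <;> simp [h]
  | add p q hp hq => simp only [map_add, coeff_add, hp, hq, smul_add]

end Euler

section CharZero

variable {σ K : Type*} [Fintype σ] [Field K] [CharZero K]

lemma grad_eq_zero_of_dotX_grad_eq_zero {p : MvPolynomial σ K} (h : dotX (grad p) = 0) :
    grad p = 0 := by
  suffices p = C (coeff 0 p) by
    ext i : 1
    rw [grad_apply, this, pderiv_C, Pi.zero_apply]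
  ext d
  classical
  rw [coeff_C]
  split_ifs with hd
  · rw [hd]
  · have := coeff_dotX_grad p d
    rw [h, coeff_zero, eq_comm, smul_eq_zero] at this
    exact this.resolve_left (by simpa [Finsupp.degree_eq_zero_iff] using Ne.symm hd)

lemma exists_dotX_grad_eq {f : MvPolynomial σ K} (hf : coeff 0 f = 0) :
    ∃ p : MvPolynomial σ K, dotX (grad p) = f ∧ p.totalDegree ≤ f.totalDegree := by
  refine ⟨∑ d ∈ f.support, monomial d ((d.degree : K)⁻¹ * coeff d f), ?_, ?_⟩
  · conv_rhs => rw [f.as_sum]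
    rw [map_sum, map_sum]
    refine Finset.sum_congr rfl fun d hd => ?_
    have hd0 : (d.degree : K) ≠ 0 := by
      rw [Nat.cast_ne_zero, Ne, Finsupp.degree_eq_zero_iff]
      rintro rfl
      exact mem_support_iff.mp hd hf
    rw [dotX_grad_monomial, smul_monomial, nsmul_eq_mul, ← mul_assoc,
      mul_inv_cancel₀ hd0, one_mul]
  · exact totalDegree_finsetSum_le fun d hd =>
      (totalDegree_monomial_le _ _).trans (le_totalDegree hd)

end CharZero

section Koszul

variable {σ R : Type*}

lemma totalDegree_aeval_le [CommSemiring R] {u : σ → MvPolynomial σ R}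
    (hu : ∀ k, (u k).totalDegree ≤ 1) (p : MvPolynomial σ R) :
    (aeval u p).totalDegree ≤ p.totalDegree := by
  rw [aeval_def, eval₂_eq]
  refine totalDegree_finsetSum_le fun d hd => (totalDegree_mul _ _).trans ?_
  rw [algebraMap_eq, totalDegree_C, zero_add]
  refine (totalDegree_finsetProd _ _).trans (le_trans ?_ (le_totalDegree hd))
  exact Finset.sum_le_sum fun k _ =>
    (totalDegree_pow _ _).trans (by simpa using Nat.mul_le_mul_left (d k) (hu k))

lemma X_dvd_sub_aeval_update_zero [CommRing R] [DecidableEq σ] (j : σ)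
    (p : MvPolynomial σ R) : X j ∣ p - aeval (Function.update X j 0) p := by
  induction p using MvPolynomial.induction_on with
  | C a => simp
  | add p q hp hq => simpa only [map_add, add_sub_add_comm] using dvd_add hp hq
  | mul_X p k hp =>
    rw [map_mul, aeval_X]
    by_cases hk : k = j
    · subst hk
      rw [Function.update_self, mul_zero, sub_zero]
      exact dvd_mul_left _ _
    · rw [Function.update_of_ne hk, ← sub_mul]
      exact hp.mul_right _

lemma totalDegree_le_of_totalDegree_X_mul_le [CommRing R] [IsDomain R]
    {i : σ} {q : MvPolynomial σ R} {n : ℕ} (h : (X i * q).totalDegree ≤ n + 1) :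
    q.totalDegree ≤ n := by
  rcases eq_or_ne q 0 with rfl | hq
  · simp
  · rw [totalDegree_mul_of_isDomain (X_ne_zero i) hq, totalDegree_X] at h
    omega

lemma totalDegree_X_cross_le [CommRing R] [Nontrivial R]
    {v : Fin 3 → MvPolynomial (Fin 3) R} {n : ℕ} (hv : ∀ i, (v i).totalDegree + 1 ≤ n)
    (i : Fin 3) : ((X ⨯₃ v) i).totalDegree ≤ n := by
  have hXv : ∀ a b, (X a * v b).totalDegree ≤ n := fun a b =>
    (totalDegree_mul _ _).trans (by rw [totalDegree_X, add_comm]; exact hv b)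
  fin_cases i <;> exact (totalDegree_sub _ _).trans (max_le (hXv _ _) (hXv _ _))

lemma exists_X_cross_eq_of_dotX_eq_zero [CommRing R] [IsDomain R]
    {g : Fin 3 → MvPolynomial (Fin 3) R} (hg : dotX g = 0) {n : ℕ}
    (hdeg : ∀ i, (g i).totalDegree ≤ n + 1) :
    ∃ v : Fin 3 → MvPolynomial (Fin 3) R, X ⨯₃ v = g ∧ ∀ i, (v i).totalDegree ≤ n := by
  -- Setting `X 2 = 0` leaves the syzygy `X 0 * a₀ + X 1 * a₁ = 0`, whose solutions are the
  -- multiples of `(X 1, -X 0)` because `X 1` is prime; the rest of `g` is divisible by `X 2`.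
  set φ := aeval (R := R) (Function.update (X : Fin 3 → MvPolynomial (Fin 3) R) 2 0)
  have hφ : ∀ p, (φ p).totalDegree ≤ p.totalDegree := totalDegree_aeval_le fun k => by
    rcases eq_or_ne k 2 with rfl | hk
    · simp
    · simp [Function.update_of_ne hk, totalDegree_X]
  have hrel : X 0 * g 0 + X 1 * g 1 + X 2 * g 2 = 0 := by
    simpa [dotX_apply, Fin.sum_univ_three] using hg
  have hrel₂ : X 0 * φ (g 0) + X 1 * φ (g 1) = 0 := by
    simpa [φ] using congrArg φ hrel
  obtain ⟨h₀, hh₀⟩ : X 2 ∣ g 0 - φ (g 0) := X_dvd_sub_aeval_update_zero 2 (g 0)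
  obtain ⟨h₁, hh₁⟩ : X 2 ∣ g 1 - φ (g 1) := X_dvd_sub_aeval_update_zero 2 (g 1)
  obtain ⟨s, hs⟩ : X 1 ∣ φ (g 0) :=
    (X_prime.dvd_or_dvd (show X 1 ∣ X 0 * φ (g 0) from
      ⟨-φ (g 1), by linear_combination hrel₂⟩)).resolve_left
      (by rw [X_dvd_X]; decide)
  have hg₁ : φ (g 1) = -(X 0 * s) :=
    mul_left_cancel₀ (X_ne_zero 1) (by linear_combination hrel₂ - X 0 * hs)
  have hg₂ : g 2 = -(X 0 * h₀ + X 1 * h₁) :=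
    mul_left_cancel₀ (X_ne_zero 2) (by linear_combination hrel - X 0 * hh₀ - X 1 * hh₁ - hrel₂)
  refine ⟨![h₁, -h₀, s], ?_, ?_⟩
  · ext i : 1
    fin_cases i <;>
      simp only [Fin.isValue, Fin.zero_eta, Fin.mk_one, Fin.reduceFinMk, cross_apply,
        Matrix.cons_val, Matrix.cons_val_one, Matrix.cons_val_zero]
    · linear_combination -hh₀ - hs
    · linear_combination -hh₁ - hg₁
    · linear_combination -hg₂
  · have hsub : ∀ i, (g i - φ (g i)).totalDegree ≤ n + 1 := fun i =>
      (totalDegree_sub _ _).trans (max_le (hdeg i) ((hφ _).trans (hdeg i)))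
    have hs_deg := totalDegree_le_of_totalDegree_X_mul_le (hs ▸ (hφ _).trans (hdeg 0))
    have h₀_deg := totalDegree_le_of_totalDegree_X_mul_le (hh₀ ▸ hsub 0)
    have h₁_deg := totalDegree_le_of_totalDegree_X_mul_le (hh₁ ▸ hsub 1)
    intro i
    fin_cases i <;> simpa

end Koszul

end MvPolynomial

lemma xvec3_eq_X : xvec3 = X := by
  ext i : 1
  fin_cases i <;> rfl

lemma mem_polyVec3 {l : ℕ} {F : Fin 3 → MvPolynomial (Fin 3) ℝ} :
    F ∈ polyVec3 l ↔ ∀ i, (F i).totalDegree ≤ l := by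
  simp [polyVec3, Submodule.mem_pi, mem_restrictTotalDegree]

lemma Gsp3_le_range_grad (l : ℕ) : Gsp3 l ≤ LinearMap.range grad :=
  Submodule.span_le.mpr fun _ ⟨p, _, hv⟩ => ⟨p, hv.symm⟩

lemma Gcsp3_le_ker_dotX (l : ℕ) : Gcsp3 l ≤ LinearMap.ker dotX :=
  Submodule.span_le.mpr fun _ ⟨_, _, hw⟩ => by
    rw [hw, xvec3_eq_X]
    exact dot_self_cross _ _

lemma Gsp3_le_polyVec3 (l : ℕ) : Gsp3 l ≤ polyVec3 l :=
  Submodule.span_le.mpr fun _ ⟨p, hp, hv⟩ => hv ▸ mem_polyVec3.mpr fun i =>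
    (totalDegree_pderiv_le p i).trans (by omega)

lemma Gcsp3_le_polyVec3 (l : ℕ) : Gcsp3 l ≤ polyVec3 l :=
  Submodule.span_le.mpr fun _ ⟨_, hv, hw⟩ => hw ▸ mem_polyVec3.mpr
    (xvec3_eq_X ▸ totalDegree_X_cross_le hv)

lemma mem_Gcsp3_of_dotX_eq_zero {l : ℕ} {G : Fin 3 → MvPolynomial (Fin 3) ℝ}
    (hG : G ∈ polyVec3 l) (h : dotX G = 0) : G ∈ Gcsp3 l := by
  cases l with
  | zero =>
    convert (Gcsp3 0).zero_mem
    ext i : 1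
    rw [totalDegree_eq_zero_iff_eq_C.mp (Nat.le_zero.mp (mem_polyVec3.mp hG i)),
      coeff_zero_eq_zero_of_dotX_eq_zero h, C_0, Pi.zero_apply]
  | succ n =>
    obtain ⟨v, hv, hdeg⟩ := exists_X_cross_eq_of_dotX_eq_zero h (mem_polyVec3.mp hG)
    exact Submodule.subset_span ⟨v, fun i => Nat.succ_le_succ (hdeg i), by rw [xvec3_eq_X, hv]⟩

lemma polyVec3_le_Gsp3_sup_Gcsp3 (l : ℕ) : polyVec3 l ≤ Gsp3 l ⊔ Gcsp3 l := by
  intro F hF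
  obtain ⟨p, hp, hp_deg⟩ := exists_dotX_grad_eq (coeff_zero_dotX F)
  have hgrad : grad p ∈ Gsp3 l :=
    Submodule.subset_span ⟨p, hp_deg.trans (totalDegree_dotX_le (mem_polyVec3.mp hF)), rfl⟩
  have hrest : F - grad p ∈ Gcsp3 l :=
    mem_Gcsp3_of_dotX_eq_zero (sub_mem hF (Gsp3_le_polyVec3 l hgrad))
      (by rw [map_sub, hp, sub_self])
  simpa using Submodule.add_mem_sup hgrad hrest

/-- For every `l ≥ 0`, the ℝ³-valued polynomial fields of degree ≤ l decompose as
the direct sum 𝒢^l ⊕ 𝒢^{c,l}. -/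
theorem polyVec3_eq_grad_directSum_gradComplement (l : ℕ) :
    Gsp3 l ⊔ Gcsp3 l = polyVec3 l ∧ Gsp3 l ⊓ Gcsp3 l = ⊥ :=
  ⟨le_antisymm (sup_le (Gsp3_le_polyVec3 l) (Gcsp3_le_polyVec3 l)) (polyVec3_le_Gsp3_sup_Gcsp3 l),
    eq_bot_iff.mpr fun w ⟨hw_grad, hw_cross⟩ => by
      obtain ⟨p, rfl⟩ := Gsp3_le_range_grad l hw_grad
      exact grad_eq_zero_of_dotX_grad_eq_zero (Gcsp3_le_ker_dotX l hw_cross)⟩
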